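/- Let c > 1 and let X be a nice c-discrete self-similar fractal generated by V. Then the full grid graph on the i-th stage X_i is connected, for every i ∈ ℕ. -/

import Mathlib

/-- Stages of the `c`-discrete self-similar fractal generated by `V`. -/
def stage (c : ℤ) (V : Set (ℤ × ℤ)) : ℕ → Set (ℤ × ℤ)
  | 0 => {(0, 0)}
  | i + 1 =>
    stage c V i ∪
      {p | ∃ x ∈ stage c V i, ∃ v ∈ V, p = (x.1 + c ^ i * v.1, x.2 + c ^ i * v.2)}

/-- The full grid graph on `ℤ²`: edges between points at distance 1. -/
def gridGraph : SimpleGraph (ℤ × ℤ) :=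
  SimpleGraph.fromRel (fun p q => (p.1 - q.1).natAbs + (p.2 - q.2).natAbs = 1)

/-!
`X_{i+1}` is the union of the translated copies `c^i • v + X_i` over `v ∈ V`, the copy for
`v = 0` being `X_i` itself, and each copy is connected by induction. Writing `t < c^i` in base `c`
shows that `X_i` contains the segment `{t • e | 0 ≤ t < c^i}` for `e = (1, 0), (0, 1)`, because
`V` contains the corresponding segments of length `c`. Hence, when `v` and `v + e` are adjacent
in `V`, the far end `c^i • v + (c^i - 1) • e` of the copy of `v` is adjacent to the corner
`c^i • (v + e)` of the copy of `v + e`. Finally, connected sets indexed by the vertices of a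
connected graph, the sets of adjacent indices being joined by an edge, have a connected union.
-/

namespace SimpleGraph

variable {V W ι : Type*} {G : SimpleGraph V}

theorem Connected.induce_image {G' : SimpleGraph W} (φ : G →g G') {s : Set V}
    (h : (G.induce s).Connected) : (G'.induce (φ '' s)).Connected :=
  h.map (induceHom φ (Set.mapsTo_image φ s))
    ((Set.mapsTo_image φ s).restrict_surjective_iff.mpr (Set.surjOn_image φ s))

theorem induce_iUnion_connected_of_adj {H : SimpleGraph ι} (hH : H.Connected)
    {S : ι → Set V} (hS : ∀ i, (G.induce (S i)).Connected)
    (hadj : ∀ i j, H.Adj i j → ∃ a ∈ S i, ∃ b ∈ S j, G.Adj a b) :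
    (G.induce (⋃ i, S i)).Connected := by
  have within (i : ι) {a b : V} (ha : a ∈ S i) (hb : b ∈ S i) :
      (G.induce (⋃ i, S i)).Reachable ⟨a, Set.mem_iUnion_of_mem i ha⟩
        ⟨b, Set.mem_iUnion_of_mem i hb⟩ :=
    ((hS i).preconnected ⟨a, ha⟩ ⟨b, hb⟩).map (G.induceHomOfLE (Set.subset_iUnion S i)).toHom
  have across {i j : ι} (w : H.Walk i j) {a b : V} (ha : a ∈ S i) (hb : b ∈ S j) :
      (G.induce (⋃ i, S i)).Reachable ⟨a, Set.mem_iUnion_of_mem i ha⟩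
        ⟨b, Set.mem_iUnion_of_mem j hb⟩ := by
    induction w generalizing a with
    | nil => exact within _ ha hb
    | @cons i k j hik _ ih =>
      obtain ⟨a', ha', b', hb', hab'⟩ := hadj i k hik
      have step : (G.induce (⋃ i, S i)).Adj ⟨a', Set.mem_iUnion_of_mem i ha'⟩
          ⟨b', Set.mem_iUnion_of_mem k hb'⟩ := hab'
      exact (within i ha ha').trans (step.reachable.trans (ih hb' hb))
  obtain ⟨i₀⟩ := hH.nonempty
  obtain ⟨⟨a₀, ha₀⟩⟩ := (hS i₀).nonempty
  rw [connected_iff_exists_forall_reachable]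
  refine ⟨⟨a₀, Set.mem_iUnion_of_mem i₀ ha₀⟩, fun ⟨b, hb⟩ => ?_⟩
  obtain ⟨j, hbj⟩ := Set.mem_iUnion.mp hb
  exact across (hH.preconnected i₀ j).some ha₀ hbj

end SimpleGraph

theorem gridGraph_adj_iff {p q : ℤ × ℤ} :
    gridGraph.Adj p q ↔ (p.1 - q.1).natAbs + (p.2 - q.2).natAbs = 1 := by
  rw [gridGraph, SimpleGraph.fromRel_adj]
  constructor
  · rintro ⟨-, h | h⟩ <;> omega
  · intro h
    exact ⟨by rintro rfl; simp at h, Or.inl h⟩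

theorem gridGraph_adj_add_right {p q : ℤ × ℤ} (w : ℤ × ℤ) :
    gridGraph.Adj (p + w) (q + w) ↔ gridGraph.Adj p q := by
  simp only [gridGraph_adj_iff, Prod.fst_add, Prod.snd_add, add_sub_add_right_eq_sub]

def gridGraphAddRight (w : ℤ × ℤ) : gridGraph →g gridGraph where
  toFun p := p + w
  map_rel' := (gridGraph_adj_add_right w).mpr

def axisUnits : Set (ℤ × ℤ) := {(1, 0), (0, 1)}

theorem gridGraph_adj_add_of_mem_axisUnits {e : ℤ × ℤ} (he : e ∈ axisUnits) (p : ℤ × ℤ) :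
    gridGraph.Adj p (p + e) := by
  rcases he with rfl | rfl <;> simp [gridGraph_adj_iff]

theorem exists_mem_axisUnits_of_gridGraph_adj {p q : ℤ × ℤ} (h : gridGraph.Adj p q) :
    ∃ e ∈ axisUnits, q = p + e ∨ p = q + e := by
  rw [gridGraph_adj_iff] at h
  obtain ⟨p₁, p₂⟩ := p
  obtain ⟨q₁, q₂⟩ := q
  simp only [axisUnits, Set.mem_insert_iff, Set.mem_singleton_iff, or_and_right, exists_or,
    exists_eq_left, Prod.mk_add_mk, Prod.mk.injEq] at h ⊢
  omega

section Stage

variable {c : ℤ} {V : Set (ℤ × ℤ)}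

theorem zero_mem_stage (c : ℤ) (V : Set (ℤ × ℤ)) : ∀ i, (0 : ℤ × ℤ) ∈ stage c V i
  | 0 => rfl
  | i + 1 => Or.inl (zero_mem_stage c V i)

theorem add_smul_mem_stage_succ {i : ℕ} {x v : ℤ × ℤ} (hx : x ∈ stage c V i) (hv : v ∈ V) :
    x + c ^ i • v ∈ stage c V (i + 1) :=
  Or.inr ⟨x, hx, v, hv, rfl⟩

theorem smul_mem_stage (hc : 0 < c) {e : ℤ × ℤ} (he : ∀ t, 0 ≤ t → t < c → t • e ∈ V) :
    ∀ i t, 0 ≤ t → t < c ^ i → t • e ∈ stage c V i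
  | 0, t, ht₀, ht => by
    obtain rfl : t = 0 := by rw [pow_zero] at ht; omega
    rw [zero_smul]
    exact zero_mem_stage c V 0
  | i + 1, t, ht₀, ht => by
    have hci : 0 < c ^ i := pow_pos hc i
    have hq : t / c ^ i < c := by
      rw [Int.ediv_lt_iff_lt_mul hci, mul_comm, ← pow_succ]
      omega
    have hdecomp : t • e = (t % c ^ i) • e + c ^ i • ((t / c ^ i) • e) := by
      rw [smul_smul, ← add_smul, Int.emod_add_mul_ediv]
    rw [hdecomp]
    exact add_smul_mem_stage_succ
      (smul_mem_stage hc he i _ (Int.emod_nonneg t hci.ne') (Int.emod_lt_of_pos t hci))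
      (he _ (Int.ediv_nonneg ht₀ hci.le) hq)

def stageBlock (c : ℤ) (V : Set (ℤ × ℤ)) (i : ℕ) (v : ℤ × ℤ) : Set (ℤ × ℤ) :=
  (· + c ^ i • v) '' stage c V i

theorem stage_succ_eq_iUnion_stageBlock (h₀ : (0 : ℤ × ℤ) ∈ V) (i : ℕ) :
    stage c V (i + 1) = ⋃ v : V, stageBlock c V i v := by
  ext p
  simp only [Set.mem_iUnion, stageBlock, Set.mem_image, Subtype.exists, exists_prop]
  constructor
  · rintro (hp | ⟨x, hx, v, hv, rfl⟩)
    · exact ⟨0, h₀, p, hp, by simp⟩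
    · exact ⟨v, hv, x, hx, rfl⟩
  · rintro ⟨v, hv, x, hx, rfl⟩
    exact add_smul_mem_stage_succ hx hv

theorem exists_gridGraph_adj_stageBlock {i : ℕ} {e : ℤ × ℤ} (he : e ∈ axisUnits)
    (hedge : (c ^ i - 1) • e ∈ stage c V i) (v : ℤ × ℤ) :
    ∃ a ∈ stageBlock c V i v, ∃ b ∈ stageBlock c V i (v + e), gridGraph.Adj a b := by
  refine ⟨_, ⟨_, hedge, rfl⟩, _, ⟨0, zero_mem_stage c V i, rfl⟩, ?_⟩
  convert gridGraph_adj_add_of_mem_axisUnits he _ using 1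
  simp only [zero_add, smul_add, sub_smul, one_smul]
  abel

end Stage

theorem stage_gridGraph_connected_general (c : ℤ) (hc : 1 < c) (V : Set (ℤ × ℤ))
    (hnice :
      (Set.Icc (0 : ℤ) (c - 1) ×ˢ ({0} : Set ℤ)) ∪ (({0} : Set ℤ) ×ˢ Set.Icc (0 : ℤ) (c - 1))
        ⊆ V)
    (hconn : (gridGraph.induce V).Connected) :
    ∀ i : ℕ, (gridGraph.induce (stage c V i)).Connected := by
  have haxis : ∀ e ∈ axisUnits, ∀ t, 0 ≤ t → t < c → t • e ∈ V := by
    rintro e (rfl | rfl) t ht₀ ht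
    · simpa using hnice (Or.inl ⟨⟨ht₀, by omega⟩, rfl⟩ : (t, (0 : ℤ)) ∈ _)
    · simpa using hnice (Or.inr ⟨rfl, ⟨ht₀, by omega⟩⟩ : ((0 : ℤ), t) ∈ _)
  have h₀ : (0 : ℤ × ℤ) ∈ V := by simpa using haxis (1, 0) (Or.inl rfl) 0 le_rfl (by omega)
  intro i
  induction i with
  | zero =>
    show (gridGraph.induce {(0, 0)}).Connected
    rw [SimpleGraph.induce_singleton_eq_top]
    exact SimpleGraph.connected_top
  | succ i ih =>
    have hedge (e : ℤ × ℤ) (he : e ∈ axisUnits) : (c ^ i - 1) • e ∈ stage c V i :=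
      smul_mem_stage (by omega) (haxis e he) i _ (by linarith [one_le_pow₀ hc.le (n := i)])
        (by omega)
    rw [stage_succ_eq_iUnion_stageBlock h₀]
    refine SimpleGraph.induce_iUnion_connected_of_adj hconn
      (fun v => ih.induce_image (gridGraphAddRight _)) ?_
    intro v w hvw
    obtain ⟨e, he, hw | hv⟩ :=
      exists_mem_axisUnits_of_gridGraph_adj (SimpleGraph.induce_adj.mp hvw)
    · rw [hw]
      exact exists_gridGraph_adj_stageBlock he (hedge e he) v
    · obtain ⟨a, ha, b, hb, hab⟩ := exists_gridGraph_adj_stageBlock he (hedge e he) w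
      rw [hv]
      exact ⟨b, hb, a, ha, hab.symm⟩

/-- For a nice self-similar fractal, every stage has connected full grid graph. -/
theorem stage_gridGraph_connected (c : ℤ) (hc : 1 < c) (V : Set (ℤ × ℤ))
    (hV : V ⊆ Set.Icc (0 : ℤ) (c - 1) ×ˢ Set.Icc (0 : ℤ) (c - 1))
    (hnice :
      (Set.Icc (0 : ℤ) (c - 1) ×ˢ ({0} : Set ℤ)) ∪ (({0} : Set ℤ) ×ˢ Set.Icc (0 : ℤ) (c - 1))
        ⊆ V)
    (hconn : (gridGraph.induce V).Connected) :
    ∀ i : ℕ, (gridGraph.induce (stage c V i)).Connected :=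
  stage_gridGraph_connected_general c hc V hnice hconn
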